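/- Every minor of a Bessel collocation matrix at positive increasing nodes is positive; in particular, for any 0 < t_0 < ⋯ < t_{n-1}, the determinant det(B_{j-1}(t_{i-1}))_{1≤i,j≤n} > 0. -/

import Mathlib

/-!
Writing `B_m(x) = ∑ₖ C(m+k, 2k) · (2k)!/(2ᵏ k!) · xᵏ`, a minor of the collocation matrix
factors as `V · W`, with `V = (x_i ^ k)` and `W = ((2k)!/(2ᵏ k!) · C(c_j + k, 2k))`. By
Cauchy–Binet its determinant is a sum of products of maximal minors of `V` and `W`.

The maximal minors of `V` are generalized Vandermonde determinants at increasing positive nodes.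
By Descartes' rule of signs they never vanish on the convex set of such node vectors, and at the
nodes `2 ^ i` they are ordinary Vandermonde determinants, hence they are all positive.

The matrix `(C(j+k, 2k))_{k,j}` is totally nonnegative: by Vandermonde's identity it is the
product of the coefficient matrices of the powers of `X + X²` and (transposed) of `1 + X`, and
multiplying by a polynomial with two adjacent nonnegative coefficients acts on coefficient rows
through a nonnegative band matrix. Its minor on the chosen columns themselves is unitriangular,
so one term of the Cauchy–Binet sum is strictly positive.
-/

open Finset Matrix Polynomial Filter

/-- The Bessel polynomial `B_m` evaluated at `x`. -/
noncomputable def besselPoly (m : ℕ) (x : ℝ) : ℝ :=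
  ∑ k ∈ Finset.range (m + 1),
    ((m + k).factorial : ℝ) / (2 ^ k * (m - k).factorial * k.factorial) * x ^ k

namespace Matrix

variable {R ι : Type*}

theorem det_mul_eq_sum_orderEmbedding [CommRing R] [Fintype ι] [LinearOrder ι] {p : ℕ}
    (V : Matrix (Fin p) ι R) (W : Matrix ι (Fin p) R) :
    (V * W).det = ∑ e : Fin p ↪o ι, (V.submatrix id e).det * (W.submatrix e id).det := by
  classical
  let B := (Pi.basisFun R ι).exteriorPower p
  -- Expand the wedge of the rows of `V` in the basis of `⋀^p (ι → R)` and apply the linear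
  -- form induced by the alternating map `u ↦ det (u * W)`.
  let L := exteriorPower.alternatingMapLinearEquiv
    ((detRowAlternating (n := Fin p) (R := R)).compLinearMap W.vecMulLinear)
  have hV : exteriorPower.ιMulti R p (fun i => V i) =
      ∑ s, (V.submatrix id (Set.powersetCard.ofFinEmbEquiv.symm s)).det • B s := by
    rw [← B.sum_repr (exteriorPower.ιMulti R p (fun i => V i))]
    congr 1 with s
    rw [exteriorPower.basis_repr_apply, exteriorPower.ιMultiDual_apply_ιMulti]
    rfl
  have hW : ∀ s, L (B s) = (W.submatrix (Set.powersetCard.ofFinEmbEquiv.symm s) id).det := by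
    intro s
    rw [exteriorPower.basis_apply, exteriorPower.ιMulti_family,
      exteriorPower.alternatingMapLinearEquiv_apply_ιMulti]
    show det _ = _
    congr 1
    ext i j
    simp [vecMul, dotProduct, Pi.single_apply]
  calc (V * W).det = L (exteriorPower.ιMulti R p (fun i => V i)) := by
        rw [exteriorPower.alternatingMapLinearEquiv_apply_ιMulti]; rfl
    _ = _ := by
        simp only [hV, map_sum, map_smul, hW, smul_eq_mul]
        exact Equiv.sum_comp Set.powersetCard.ofFinEmbEquiv.symm
          fun e => (V.submatrix id e).det * (W.submatrix e id).det

theorem det_mul_nonneg_of_minors [CommRing R] [PartialOrder R] [IsOrderedRing R] [Fintype ι]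
    [LinearOrder ι] {p : ℕ} {V : Matrix (Fin p) ι R} {W : Matrix ι (Fin p) R}
    (hV : ∀ e : Fin p ↪o ι, 0 ≤ (V.submatrix id e).det)
    (hW : ∀ e : Fin p ↪o ι, 0 ≤ (W.submatrix e id).det) : 0 ≤ (V * W).det := by
  rw [det_mul_eq_sum_orderEmbedding]
  exact sum_nonneg fun e _ => mul_nonneg (hV e) (hW e)

theorem det_mul_pos_of_minors [CommRing R] [PartialOrder R] [IsStrictOrderedRing R] [Fintype ι]
    [LinearOrder ι] {p : ℕ} {V : Matrix (Fin p) ι R} {W : Matrix ι (Fin p) R}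
    (hV : ∀ e : Fin p ↪o ι, 0 < (V.submatrix id e).det)
    (hW : ∀ e : Fin p ↪o ι, 0 ≤ (W.submatrix e id).det)
    (hW' : ∃ e : Fin p ↪o ι, 0 < (W.submatrix e id).det) : 0 < (V * W).det := by
  rw [det_mul_eq_sum_orderEmbedding]
  obtain ⟨e, he⟩ := hW'
  exact sum_pos' (fun e _ => mul_nonneg (hV e).le (hW e)) ⟨e, mem_univ e, mul_pos (hV e) he⟩

def TotallyNonneg {m n : Type*} [LinearOrder m] [LinearOrder n] [CommRing R] [PartialOrder R]
    (A : Matrix m n R) : Prop :=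
  ∀ (p : ℕ) (r : Fin p → m) (c : Fin p → n), StrictMono r → StrictMono c →
    0 ≤ (A.submatrix r c).det

namespace TotallyNonneg

variable {m n : Type*} [LinearOrder m] [LinearOrder n] [CommRing R] [PartialOrder R]

theorem submatrix {m' n' : Type*} [LinearOrder m'] [LinearOrder n'] {A : Matrix m n R}
    (hA : A.TotallyNonneg) {f : m' → m} {g : n' → n} (hf : StrictMono f) (hg : StrictMono g) :
    (A.submatrix f g).TotallyNonneg :=
  fun _ _ _ hr hc => hA _ _ _ (hf.comp hr) (hg.comp hc)

theorem transpose {A : Matrix m n R} (hA : A.TotallyNonneg) : Aᵀ.TotallyNonneg :=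
  fun p r c hr hc => by
    rw [← transpose_submatrix, det_transpose]
    exact hA p c r hc hr

theorem mul [IsOrderedRing R] [Fintype ι] [LinearOrder ι] {A : Matrix m ι R} {B : Matrix ι n R}
    (hA : A.TotallyNonneg) (hB : B.TotallyNonneg) : (A * B).TotallyNonneg :=
  fun p r c hr hc => by
    rw [← submatrix_mul_equiv (e₂ := Equiv.refl ι), Equiv.coe_refl]
    exact det_mul_nonneg_of_minors (fun e => hA p r e hr e.strictMono)
      (fun e => hB p e c e.strictMono hc)

theorem of_eventually_eq_sum [IsOrderedRing R] {A : Matrix m ℕ R} {B : Matrix ℕ n R}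
    {C : Matrix m n R} (hA : A.TotallyNonneg) (hB : B.TotallyNonneg)
    (hC : ∀ i j, ∀ᶠ N in atTop, C i j = ∑ t ∈ range N, A i t * B t j) :
    C.TotallyNonneg := by
  intro p r c hr hc
  obtain ⟨N, hN⟩ := (eventually_all.2 fun i => eventually_all.2 fun j =>
    hC (r i) (c j)).exists
  have hprod : C.submatrix r c =
      (A.submatrix id (Fin.val : Fin N → ℕ) * B.submatrix Fin.val id).submatrix r c := by
    ext i j
    simp only [submatrix_apply, hN i j]
    exact (Fin.sum_univ_eq_sum_range (fun t => A (r i) t * B t (c j)) N).symm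
  rw [hprod]
  exact ((hA.submatrix strictMono_id Fin.val_strictMono).mul
    (hB.submatrix Fin.val_strictMono strictMono_id)) p r c hr hc

end TotallyNonneg

theorem det_submatrix_eq_prod_of_band [CommRing R] {U : Matrix ℕ ℕ R} {s : ℕ}
    (hU : ∀ i j, U i j ≠ 0 → i + s ≤ j ∧ j ≤ i + s + 1) {p : ℕ} {r c : Fin p → ℕ}
    (hr : StrictMono r) (hc : StrictMono c) :
    (U.submatrix r c).det = ∏ i, U (r i) (c i) := by
  rw [det_apply', sum_eq_single (1 : Equiv.Perm (Fin p))]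
  · simp
  · intro σ _ hσ
    suffices ∃ i, U (r (σ i)) (c i) = 0 by
      obtain ⟨i, hi⟩ := this
      rw [prod_eq_zero (mem_univ i) (by simpa using hi), mul_zero]
    by_contra! hne
    -- A nonzero term forces `σ` to have no inversion, hence to be the identity.
    refine hσ (Equiv.ext fun i => congrFun (StrictMono.eq_id fun i j hij => ?_) i)
    refine (σ.injective.ne hij.ne).lt_of_le (not_lt.1 fun hji => ?_)
    have := hr hji
    have := hc hij
    have := hU _ _ (hne i)
    have := hU _ _ (hne j)
    omega
  · simp

theorem totallyNonneg_of_band [CommRing R] [PartialOrder R] [IsOrderedRing R]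
    {U : Matrix ℕ ℕ R} {s : ℕ} (hU : ∀ i j, U i j ≠ 0 → i + s ≤ j ∧ j ≤ i + s + 1)
    (hU₀ : ∀ i j, 0 ≤ U i j) : U.TotallyNonneg := fun _ _ _ hr hc => by
  rw [det_submatrix_eq_prod_of_band hU hr hc]
  exact prod_nonneg fun i _ => hU₀ _ _

end Matrix

namespace Polynomial

theorem coeff_pow_succ_eq_sum {R : Type*} [CommSemiring R] (f : R[X]) (k : ℕ) {m N : ℕ}
    (hmN : m < N) :
    (f ^ (k + 1)).coeff m = ∑ t ∈ range N, (f ^ k).coeff t * (X ^ t * f).coeff m := by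
  rw [pow_succ, coeff_mul, Nat.sum_antidiagonal_eq_sum_range_succ_mk,
    ← sum_subset (range_subset_range.2 hmN) fun t _ ht => ?_]
  · refine sum_congr rfl fun t ht => ?_
    rw [coeff_X_pow_mul', if_pos (Nat.lt_succ_iff.1 (mem_range.1 ht))]
  · rw [mem_range, not_lt] at ht
    rw [coeff_X_pow_mul', if_neg (Nat.not_le.2 ht), mul_zero]

variable {R : Type*} [CommRing R] [PartialOrder R] [IsOrderedRing R] {f : R[X]} {s : ℕ}

theorem totallyNonneg_coeff_X_pow_mul (hf : ∀ m, 0 ≤ f.coeff m)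
    (hsupp : ∀ m, f.coeff m ≠ 0 → m = s ∨ m = s + 1) :
    (Matrix.of fun t m => (X ^ t * f).coeff m).TotallyNonneg := by
  refine totallyNonneg_of_band (s := s) (fun t m hne => ?_) fun t m => ?_ <;>
    simp only [Matrix.of_apply, coeff_X_pow_mul'] at * <;> split_ifs at *
  · have := hsupp _ hne; omega
  · exact absurd rfl hne
  · exact hf _
  · exact le_rfl

theorem totallyNonneg_coeff_pow (hf : ∀ m, 0 ≤ f.coeff m)
    (hsupp : ∀ m, f.coeff m ≠ 0 → m = s ∨ m = s + 1) :
    (Matrix.of fun k m => (f ^ k).coeff m).TotallyNonneg := by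
  set A : Matrix ℕ ℕ R := Matrix.of fun k m => (f ^ k).coeff m
  have hS := totallyNonneg_coeff_X_pow_mul hf hsupp
  intro p
  induction p with
  | zero => intro r c _ _; simp
  | succ p ihp =>
    suffices ∀ a (r c : Fin (p + 1) → ℕ), StrictMono r → StrictMono c → r 0 = a →
        0 ≤ (A.submatrix r c).det from fun r c hr hc => this _ r c hr hc rfl
    intro a
    induction a with
    | zero =>
      -- row `0` of `A` is the unit vector `e₀`
      intro r c hr hc hr0
      have hrow0 : ∀ j, A.submatrix r c 0 j = if c j = 0 then 1 else 0 := fun j => by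
        simp [A, hr0, coeff_one]
      by_cases hc0 : c 0 = 0
      · have hcpos : ∀ j, c (Fin.succ j) ≠ 0 := fun j => by
          have := hc (Fin.succ_pos j); omega
        rw [det_succ_row_zero, Fin.sum_univ_succ]
        simp only [hrow0, hc0, hcpos, if_true, if_false, mul_zero, zero_mul, sum_const_zero,
          add_zero, Fin.val_zero, pow_zero, one_mul, Fin.succAbove_zero, submatrix_submatrix]
        exact ihp _ _ (hr.comp Fin.strictMono_succ) (hc.comp Fin.strictMono_succ)
      · refine (det_eq_zero_of_row_eq_zero 0 fun j => ?_).ge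
        have := hc.monotone (Fin.zero_le j)
        rw [hrow0, if_neg (by omega)]
    | succ a iha =>
      -- shift every row down by one and factor out the band matrix of `X ^ t * f`
      intro r c hr hc hr0
      have hr1 : ∀ i, 1 ≤ r i := fun i => by have := hr.monotone (Fin.zero_le i); omega
      have hr' : StrictMono fun i => r i - 1 := fun i j hij => by
        have := hr hij; have := hr1 i; dsimp only; omega
      obtain ⟨N, hN⟩ : ∃ N, ∀ j, c j < N :=
        ⟨c (Fin.last p) + 1, fun j => Nat.lt_succ_of_le (hc.monotone (Fin.le_last j))⟩
      have hprod : A.submatrix r c = A.submatrix (fun i => r i - 1) (Fin.val : Fin N → ℕ) *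
          (Matrix.of fun t m => (X ^ t * f).coeff m).submatrix Fin.val c := by
        ext i j
        change (f ^ r i).coeff (c j) =
          ∑ t : Fin N, (f ^ (r i - 1)).coeff t * (X ^ (t : ℕ) * f).coeff (c j)
        rw [← Nat.sub_add_cancel (hr1 i), coeff_pow_succ_eq_sum f _ (hN j), Nat.add_sub_cancel]
        exact (Fin.sum_univ_eq_sum_range
          (fun t => (f ^ (r i - 1)).coeff t * (X ^ t * f).coeff (c j)) N).symm
      rw [hprod]
      exact det_mul_nonneg_of_minors
        (fun e => iha _ _ hr' (Fin.val_strictMono.comp e.strictMono) (by simp [hr0]))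
        (fun e => hS _ _ _ (Fin.val_strictMono.comp e.strictMono) hc)

end Polynomial

theorem Nat.choose_add_two_mul_eq_sum (j k N : ℕ) (hN : 2 * k < N) :
    (j + k).choose (2 * k) =
      ∑ t ∈ range N, (if k ≤ t then k.choose (t - k) else 0) * j.choose t := by
  rw [Nat.add_choose_eq, Nat.sum_antidiagonal_eq_sum_range_succ_mk, eq_comm,
    ← sum_subset (range_subset_range.2 hN) fun t _ ht => ?_]
  · refine sum_congr rfl fun t ht => ?_
    rw [mem_range] at ht
    split_ifs with hkt
    · rw [mul_comm, ← Nat.choose_symm (by omega : t - k ≤ k)]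
      congr 2
      omega
    · rw [Nat.choose_eq_zero_of_lt (show k < 2 * k - t by omega), mul_zero, zero_mul]
  · rw [mem_range, not_lt] at ht
    rw [if_pos (by omega), Nat.choose_eq_zero_of_lt (by omega), zero_mul]

theorem totallyNonneg_choose_add_two_mul :
    (Matrix.of fun k j : ℕ => ((j + k).choose (2 * k) : ℝ)).TotallyNonneg := by
  have hP := totallyNonneg_coeff_pow (f := (1 + X : ℝ[X])) (s := 0)
    (fun m => by rw [coeff_add, coeff_one, coeff_X]; split_ifs <;> norm_num)
    (fun m hm => by
      rw [coeff_add, coeff_one, coeff_X] at hm; split_ifs at hm <;> first | omega | simp at hm)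
  have hQ := totallyNonneg_coeff_pow (f := (X + X ^ 2 : ℝ[X])) (s := 1)
    (fun m => by rw [coeff_add, coeff_X, coeff_X_pow]; split_ifs <;> norm_num)
    (fun m hm => by
      rw [coeff_add, coeff_X, coeff_X_pow] at hm; split_ifs at hm <;> first | omega | simp at hm)
  refine hQ.of_eventually_eq_sum hP.transpose fun k j =>
    eventually_atTop.2 ⟨2 * k + 1, fun N hN => ?_⟩
  have hXX : (X + X ^ 2 : ℝ[X]) = X * (1 + X) := by ring
  simp only [Matrix.of_apply, Matrix.transpose_apply, hXX, mul_pow, coeff_X_pow_mul',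
    coeff_one_add_X_pow]
  rw [Nat.choose_add_two_mul_eq_sum j k N (by omega)]
  push_cast
  refine sum_congr rfl fun t _ => ?_
  split_ifs <;> simp

theorem det_submatrix_choose_add_two_mul_self {p : ℕ} {c : Fin p → ℕ} (hc : StrictMono c) :
    ((Matrix.of fun k j : ℕ => ((j + k).choose (2 * k) : ℝ)).submatrix c c).det = 1 := by
  rw [det_of_isUpperTriangular fun i j hji => ?_]
  · simp [← two_mul]
  · have : c j < c i := hc hji
    simp [Nat.choose_eq_zero_of_lt (show c j + c i < 2 * c i by omega)]

theorem Polynomial.signVariations_lt_card_support {R : Type*} [Semiring R] [LinearOrder R]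
    {P : R[X]} (hP : P ≠ 0) : P.signVariations < P.support.card := by
  induction h : P.support.card using Nat.strong_induction_on generalizing P with
  | _ k ih =>
    by_cases hP' : P.eraseLead = 0
    · have hmono := P.eraseLead_add_monomial_natDegree_leadingCoeff
      rw [hP', zero_add] at hmono
      rw [← hmono, signVariations_monomial, ← h]
      exact card_pos.2 (nonempty_support_iff.2 hP)
    · have := ih _ (h ▸ eraseLead_support_card_lt hP) hP' rfl
      have := P.signVariations_le_eraseLead_succ
      have := card_support_eraseLead (f := P)
      omega

namespace Matrix

def genVandermonde {R : Type*} [CommRing R] {k : ℕ} (x : Fin k → R) (e : Fin k → ℕ) :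
    Matrix (Fin k) (Fin k) R :=
  of fun i j => x i ^ e j

theorem det_genVandermonde_ne_zero {k : ℕ} {x : Fin k → ℝ} {e : Fin k → ℕ}
    (hx : Function.Injective x) (hpos : ∀ i, 0 < x i) (he : Function.Injective e) :
    (genVandermonde x e).det ≠ 0 := by
  classical
  intro hdet
  obtain ⟨c, hc0, hc⟩ := exists_mulVec_eq_zero_iff.2 hdet
  set P : ℝ[X] := ∑ j, C (c j) * X ^ e j
  have hcoeff : ∀ m, P.coeff m = ∑ j, if m = e j then c j else 0 := fun m => by
    simp [P, finsetSum_coeff]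
  have hP : P ≠ 0 := by
    obtain ⟨j, hj⟩ := Function.ne_iff.1 hc0
    refine ne_of_apply_ne (coeff · (e j)) ?_
    simpa [hcoeff, he.eq_iff] using hj
  have hsupp : P.support.card ≤ k := by
    refine (card_le_card (t := univ.image e) fun m hm => ?_).trans
      (card_image_le.trans (card_fin k).le)
    rw [mem_support_iff, hcoeff] at hm
    obtain ⟨j, -, hj⟩ := exists_ne_zero_of_sum_ne_zero hm
    exact mem_image.2 ⟨j, mem_univ j, (ite_ne_right_iff.1 hj).1.symm⟩
  have hroots : k ≤ P.roots.countP (0 < ·) := by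
    rw [Multiset.countP_eq_card_filter]
    refine le_trans ?_ (Multiset.toFinset_card_le _)
    rw [← card_fin k, ← card_image_of_injective univ hx]
    refine card_le_card fun y hy => ?_
    obtain ⟨i, -, rfl⟩ := mem_image.1 hy
    rw [Multiset.mem_toFinset, Multiset.mem_filter, mem_roots hP]
    refine ⟨?_, hpos i⟩
    have := congrFun hc i
    simp only [mulVec, dotProduct, genVandermonde, of_apply, Pi.zero_apply] at this
    simp only [IsRoot.def, P, eval_finsetSum, eval_mul, eval_C, eval_pow, eval_X]
    rw [← this]
    exact sum_congr rfl fun j _ => mul_comm _ _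
  -- Descartes: `k ≤ #positive roots ≤ #sign changes < #terms ≤ k`
  have := P.roots_countP_pos_le_signVariations
  have := signVariations_lt_card_support hP
  omega

theorem det_genVandermonde_pos {k : ℕ} {x : Fin k → ℝ} {e : Fin k → ℕ} (hx : StrictMono x)
    (hpos : ∀ i, 0 < x i) (he : StrictMono e) : 0 < (genVandermonde x e).det := by
  set S : Set (Fin k → ℝ) := {y | StrictMono y ∧ ∀ i, 0 < y i}
  have hS : Convex ℝ S := by
    refine convex_iff_forall_pos.2 fun y hy z hz a b ha hb _ => ⟨fun i j hij => ?_, fun i => ?_⟩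
    · simp only [Pi.add_apply, Pi.smul_apply, smul_eq_mul]
      nlinarith [hy.1 hij, hz.1 hij]
    · simp only [Pi.add_apply, Pi.smul_apply, smul_eq_mul]
      nlinarith [hy.2 i, hz.2 i]
  have hcont : Continuous fun y : Fin k → ℝ => (genVandermonde y e).det := by
    unfold genVandermonde; fun_prop
  -- At the nodes `2 ^ i` the matrix is a transposed Vandermonde matrix in the nodes `2 ^ e j`.
  have hpow : genVandermonde (fun i => (2 : ℝ) ^ (i : ℕ)) e =
      (vandermonde fun j => (2 : ℝ) ^ e j)ᵀ := by
    ext i j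
    simp [genVandermonde, vandermonde, ← pow_mul, mul_comm]
  have h₀ : 0 < (genVandermonde (fun i => (2 : ℝ) ^ (i : ℕ)) e).det := by
    rw [hpow, det_transpose, det_vandermonde]
    exact prod_pos fun i _ => prod_pos fun j hj =>
      sub_pos.2 (pow_lt_pow_right₀ one_lt_two (he (mem_Ioi.1 hj)))
  by_contra! hle
  obtain ⟨z, hz, hz0⟩ := hS.isPreconnected.intermediate_value (⟨hx, hpos⟩ : x ∈ S)
    (⟨fun i j hij => pow_lt_pow_right₀ one_lt_two hij, fun i => by positivity⟩ : _ ∈ S)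
    hcont.continuousOn ⟨hle, h₀.le⟩
  exact det_genVandermonde_ne_zero hz.1.injective hz.2 he.injective hz0

end Matrix

theorem besselPoly_eq_sum_choose {m N : ℕ} (hm : m < N) (x : ℝ) :
    besselPoly m x = ∑ k ∈ range N,
      x ^ k * ((2 * k).factorial / (2 ^ k * k.factorial) * (m + k).choose (2 * k)) := by
  rw [besselPoly, ← sum_subset (range_subset_range.2 hm) fun k _ hk => ?_]
  · refine sum_congr rfl fun k hk => ?_
    have hkm : 2 * k ≤ m + k := by rw [mem_range] at hk; omega
    have hfac := Nat.choose_mul_factorial_mul_factorial hkm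
    rw [show m + k - 2 * k = m - k by omega] at hfac
    rw [← hfac]
    push_cast
    field_simp
  · rw [mem_range, not_lt] at hk
    rw [Nat.choose_eq_zero_of_lt (by omega), Nat.cast_zero, mul_zero, mul_zero]

theorem det_besselPoly_pos {p : ℕ} {x : Fin p → ℝ} (hx : StrictMono x) (hpos : ∀ i, 0 < x i)
    {c : Fin p → ℕ} (hc : StrictMono c) :
    0 < (Matrix.of fun i j => besselPoly (c j) (x i)).det := by
  obtain ⟨N, hN⟩ : ∃ N, ∀ j, c j < N :=
    ⟨∑ j, c j + 1, fun j =>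
      Nat.lt_succ_of_le (single_le_sum (fun _ _ => Nat.zero_le _) (mem_univ j))⟩
  set G : Matrix ℕ ℕ ℝ := Matrix.of fun k j : ℕ => ((j + k).choose (2 * k) : ℝ)
  set d : ℕ → ℝ := fun k => (2 * k).factorial / (2 ^ k * k.factorial)
  have hd : ∀ k, 0 < d k := fun k => by positivity
  set W : Matrix (Fin N) (Fin p) ℝ := Matrix.of fun k j => d k * G k (c j)
  have hfac : (Matrix.of fun i j => besselPoly (c j) (x i)) =
      (Matrix.of fun i (k : Fin N) => x i ^ (k : ℕ)) * W := by
    ext i j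
    rw [of_apply, besselPoly_eq_sum_choose (hN j), mul_apply, ← Fin.sum_univ_eq_sum_range]
    simp [W, G, d, add_comm]
  have hW : ∀ e : Fin p ↪o Fin N, (W.submatrix e id).det =
      (∏ l, d (e l)) * (G.submatrix (fun l => (e l : ℕ)) c).det := fun e =>
    det_mul_column (fun l => d (e l)) (G.submatrix (fun l => (e l : ℕ)) c)
  rw [hfac]
  refine det_mul_pos_of_minors
    (fun e => det_genVandermonde_pos hx hpos (Fin.val_strictMono.comp e.strictMono))
    (fun e => ?_) ⟨OrderEmbedding.ofStrictMono (fun j => ⟨c j, hN j⟩) fun _ _ h => hc h, ?_⟩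
  · rw [hW]
    exact mul_nonneg (prod_nonneg fun l _ => (hd _).le)
      (totallyNonneg_choose_add_two_mul _ _ _ (Fin.val_strictMono.comp e.strictMono) hc)
  · rw [hW]
    exact mul_pos (prod_pos fun l _ => hd _) (det_submatrix_choose_add_two_mul_self hc ▸ one_pos)

theorem bessel_collocation_minors_pos_det_pos (n : ℕ) (t : Fin n → ℝ)
    (hpos : ∀ i, 0 < t i) (hmono : StrictMono t) :
    let M : Matrix (Fin n) (Fin n) ℝ := fun i j => besselPoly j (t i)
    (∀ (k : ℕ) (r c : Fin k → Fin n), StrictMono r → StrictMono c →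
        0 < (M.submatrix r c).det) ∧ 0 < M.det := by
  intro M
  have hminor : ∀ (k : ℕ) (r c : Fin k → Fin n), StrictMono r → StrictMono c →
      0 < (M.submatrix r c).det := fun k r c hr hc =>
    det_besselPoly_pos (hmono.comp hr) (fun i => hpos _) (Fin.val_strictMono.comp hc)
  exact ⟨hminor, by simpa using hminor n id id strictMono_id strictMono_id⟩
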